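/- arXiv:2012.00939 — 4 statements merged into one kernel-verified Lean document; each statement's English description precedes it below -/
import Mathlib

section
/- (Kaplansky) Let R be a ring and P a projective R-module. Then there exists a family of submodules (N_i)_{i ∈ ι} of P such that the family is independent, its supremum is all of P (so P is the internal direct sum of the N_i), and each N_i is countably generated (it is the span of a countable subset) and is itself a projective R-module. -/
/-!
Realise `P` as the range of an idempotent `e` on a free module `X →₀ R`, with `X` well-ordered.
Closing `{j}` under `i ↦ supp (e (single i 1))` gives a countable set `C j ∋ j` of indices whose
coordinate submodule is `e`-invariant. The unions `B j = ⋃ k ≤ j, C k` then give a continuous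
well-ordered filtration of `range e` by the summands `range e ⊓ supported (B j)`. Each successive
complement (the kernel, inside the `j`-th stage, of the projection onto the union of the earlier
stages) is a direct summand of the free module, and it is spanned by the images of the countably
many basis vectors indexed by `C j`, since the others are killed by its projection.
-/

section Lattice

variable {α ι : Type*} [CompleteLattice α]

theorem iSupIndep_of_disjoint_biSup_lt [IsModularLattice α] [IsCompactlyGenerated α]
    [LinearOrder ι] {t : ι → α} (h : ∀ j, Disjoint (t j) (⨆ k < j, t k)) : iSupIndep t := by
  classical
  refine iSupIndep_iff_supIndep.mpr fun s => ?_
  induction s using Finset.induction_on_max with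
  | empty => exact Finset.supIndep_empty _
  | insert j s hlt ih =>
    exact ih.insert ((h j).mono_right (Finset.sup_le fun k hk => le_biSup t (hlt k hk)))

theorem iSup_le_iSup_of_le_biSup_lt_sup [Preorder ι] [WellFoundedLT ι] {s t : ι → α}
    (h : ∀ j, s j ≤ (⨆ k < j, s k) ⊔ t j) : ⨆ j, s j ≤ ⨆ j, t j :=
  iSup_le fun j => WellFoundedLT.induction j fun j ih =>
    (h j).trans (sup_le (iSup₂_le ih) (le_iSup t j))

end Lattice

theorem Set.Countable.exists_superset_forall_subset {X : Type*} {g : X → Set X}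
    (hg : ∀ i, (g i).Countable) {s : Set X} (hs : s.Countable) :
    ∃ t, s ⊆ t ∧ t.Countable ∧ ∀ i ∈ t, g i ⊆ t := by
  let step : Set X → Set X := fun u => u ∪ ⋃ i ∈ u, g i
  have hcount : ∀ n, (step^[n] s).Countable := fun n => by
    induction n with
    | zero => exact hs
    | succ n ih =>
      rw [Function.iterate_succ_apply']
      exact ih.union (ih.biUnion fun i _ => hg i)
  refine ⟨⋃ n, step^[n] s, Set.subset_iUnion (step^[·] s) 0, Set.countable_iUnion hcount, ?_⟩
  simp only [Set.mem_iUnion]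
  rintro i ⟨n, hi⟩
  refine subset_trans ?_ (Set.subset_iUnion _ (n + 1))
  rw [Function.iterate_succ_apply']
  exact Set.subset_union_of_subset_right (Set.subset_biUnion_of_mem hi) _

namespace LinearMap.IsProj

section Semiring

variable {R M : Type*} [Semiring R] [AddCommMonoid M] [Module R M] {m n : Submodule R M}
  {p r : M →ₗ[R] M}

theorem comp_of_mem_invtSubmodule (hp : IsProj m p) (hn : n ∈ Module.End.invtSubmodule p)
    (hr : IsProj n r) : IsProj (m ⊓ n) (p ∘ₗ r) where
  map_mem x := ⟨hp.map_mem _, hn (hr.map_mem x)⟩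
  map_id x hx := by rw [comp_apply, hr.map_id x hx.2, hp.map_id x hx.1]

theorem projective [Module.Projective R M] (hp : IsProj m p) : Module.Projective R m :=
  .of_split m.subtype hp.codRestrict (LinearMap.ext fun x => hp.codRestrict_apply_cod x)

end Semiring

variable {R M : Type*} [Ring R] [AddCommGroup M] [Module R M] {m n : Submodule R M}
  {p r : M →ₗ[R] M}

theorem inf_ker (hp : IsProj m p) (hr : IsProj n r) (hnm : n ≤ m) :
    IsProj (m ⊓ ker r) ((id - r) ∘ₗ p) where
  map_mem x := by
    have hrr : r (r (p x)) = r (p x) := hr.map_id _ (hr.map_mem _)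
    refine ⟨m.sub_mem (hp.map_mem x) (hnm (hr.map_mem _)), ?_⟩
    simp [hrr]
  map_id x hx := by simp [hp.map_id x hx.1, mem_ker.mp hx.2]

theorem sup_inf_ker_eq (hr : IsProj n r) (hnm : n ≤ m) : n ⊔ m ⊓ ker r = m := by
  rw [inf_comm, ← sup_inf_assoc_of_le _ hnm, hr.isCompl.sup_eq_top, top_inf_eq]

end LinearMap.IsProj

namespace Finsupp

variable {α M R : Type*} [Semiring R] [AddCommMonoid M] [Module R M]

open Classical in
noncomputable def supportedProjection (s : Set α) : Module.End R (α →₀ M) :=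
  (supported M R s).subtype ∘ₗ restrictDom M R s

theorem isProj_supportedProjection (s : Set α) :
    LinearMap.IsProj (supported M R s) (supportedProjection (M := M) (R := R) s) := by
  classical
  exact ⟨fun x => (restrictDom M R s x).2, fun x hx =>
    congrArg Subtype.val (LinearMap.congr_fun (restrictDom_comp_subtype s) ⟨x, hx⟩)⟩

theorem supportedProjection_single_of_notMem {s : Set α} {a : α} (b : M) (ha : a ∉ s) :
    supportedProjection (R := R) s (single a b) = 0 := by
  simp [supportedProjection, ha]

theorem inf_supported_iUnion_of_directed {ι : Type*} (p : Submodule R (α →₀ M)) {s : ι → Set α}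
    (hs : Directed (· ⊆ ·) s) : p ⊓ supported M R (⋃ i, s i) = ⨆ i, p ⊓ supported M R (s i) := by
  rw [supported_iUnion]
  exact Directed.inf_iSup_eq (f := fun i => supported M R (s i))
    (hs.mono_comp _ fun _ _ h => supported_mono h)

theorem supported_mem_invtSubmodule_iff {s : Set α} {f : Module.End R (α →₀ R)} :
    supported R R s ∈ f.invtSubmodule ↔ ∀ i ∈ s, ((f (single i 1)).support : Set α) ⊆ s := by
  refine ⟨fun hs i hi => (mem_supported R _).mp (hs (single_mem_supported R 1 hi)), fun hs => ?_⟩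
  have : Submodule.span R ((single · 1) '' s) ≤ (supported R R s).comap f := by
    rw [Submodule.span_le]
    rintro - ⟨i, hi, rfl⟩
    exact (mem_supported R _).mpr (hs i hi)
  rwa [← supported_eq_span_single] at this

theorem supported_iUnion_mem_invtSubmodule {ι : Sort*} {s : ι → Set α}
    {f : Module.End R (α →₀ R)} (hs : ∀ i, supported R R (s i) ∈ f.invtSubmodule) :
    supported R R (⋃ i, s i) ∈ f.invtSubmodule := by
  simp only [supported_mem_invtSubmodule_iff, Set.mem_iUnion] at hs ⊢
  rintro x ⟨i, hx⟩
  exact (hs i x hx).trans (Set.subset_iUnion s i)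

theorem isProj_range_inf_supported {f : Module.End R (α →₀ R)} (hf : IsIdempotentElem f)
    {s : Set α} (hs : supported R R s ∈ f.invtSubmodule) :
    LinearMap.IsProj (LinearMap.range f ⊓ supported R R s) (f ∘ₗ supportedProjection s) :=
  ((LinearMap.isProj_range_iff_isIdempotentElem f).mpr hf).comp_of_mem_invtSubmodule hs
    (isProj_supportedProjection s)

theorem range_eq_span_image_of_map_single_eq_zero {N : Type*} [AddCommMonoid N] [Module R N]
    (f : (α →₀ R) →ₗ[R] N) {s : Set α} (hf : ∀ i ∉ s, f (single i 1) = 0) :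
    LinearMap.range f = Submodule.span R ((fun i => f (single i 1)) '' s) := by
  rw [LinearMap.range_eq_map, ← supported_univ, supported_eq_span_single, Submodule.map_span,
    ← Set.image_comp]
  refine le_antisymm (Submodule.span_le.mpr ?_)
    (Submodule.span_mono (Set.image_mono s.subset_univ))
  rintro - ⟨i, -, rfl⟩
  by_cases hi : i ∈ s
  · exact Submodule.subset_span ⟨i, hi, rfl⟩
  · simp [hf i hi]

end Finsupp

namespace Kaplansky

open Finsupp LinearMap
open Set (accumulate accumulate_def monotone_accumulate)

section Pieces

variable {R X : Type*} [Ring R] [LinearOrder X] {e : Module.End R (X →₀ R)} {C : X → Set X}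

variable (C) in
def below (j : X) : Set X := ⋃ k < j, accumulate C k

variable (e C) in
noncomputable def piece (j : X) : Submodule R (X →₀ R) :=
  range e ⊓ supported R R (accumulate C j) ⊓ ker (e ∘ₗ supportedProjection (below C j))

variable (e C) in
noncomputable def pieceProjection (j : X) : Module.End R (X →₀ R) :=
  (LinearMap.id - e ∘ₗ supportedProjection (below C j)) ∘ₗ
    e ∘ₗ supportedProjection (accumulate C j)

theorem below_subset_accumulate (j : X) : below C j ⊆ accumulate C j :=
  Set.iUnion₂_subset fun _ hk => monotone_accumulate hk.le

theorem biSup_lt_range_inf_supported (j : X) :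
    ⨆ k < j, range e ⊓ supported R R (accumulate C k) = range e ⊓ supported R R (below C j) := by
  rw [below, iSup_subtype', ← Set.iUnion_subtype (· < j) (accumulate C ·),
    inf_supported_iUnion_of_directed]
  exact (monotone_accumulate.comp (Subtype.mono_coe _)).directed_le

variable (hC : ∀ j, supported R R (C j) ∈ e.invtSubmodule)
include hC

theorem supported_accumulate_mem_invtSubmodule (j : X) :
    supported R R (accumulate C j) ∈ e.invtSubmodule := by
  rw [accumulate_def]
  exact supported_iUnion_mem_invtSubmodule fun k =>
    supported_iUnion_mem_invtSubmodule fun _ => hC k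

theorem supported_below_mem_invtSubmodule (j : X) :
    supported R R (below C j) ∈ e.invtSubmodule :=
  supported_iUnion_mem_invtSubmodule fun k => supported_iUnion_mem_invtSubmodule fun _ =>
    supported_accumulate_mem_invtSubmodule hC k

theorem isProj_below (he : IsIdempotentElem e) (j : X) :
    IsProj (range e ⊓ supported R R (below C j)) (e ∘ₗ supportedProjection (below C j)) :=
  isProj_range_inf_supported he (supported_below_mem_invtSubmodule hC j)

omit hC in
theorem range_inf_supported_below_le (j : X) :
    range e ⊓ supported R R (below C j) ≤ range e ⊓ supported R R (accumulate C j) :=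
  inf_le_inf_left _ (supported_mono (below_subset_accumulate j))

theorem isProj_piece (he : IsIdempotentElem e) (j : X) :
    IsProj (piece e C j) (pieceProjection e C j) :=
  (isProj_range_inf_supported he (supported_accumulate_mem_invtSubmodule hC j)).inf_ker
    (isProj_below hC he j) (range_inf_supported_below_le j)

theorem iSupIndep_piece (he : IsIdempotentElem e) : iSupIndep (piece e C) := by
  refine iSupIndep_of_disjoint_biSup_lt fun j => ?_
  refine (isProj_below hC he j).isCompl.disjoint.symm.mono inf_le_right ?_
  rw [← biSup_lt_range_inf_supported]
  exact iSup₂_mono fun k _ => inf_le_left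

theorem iSup_piece [WellFoundedLT X] (he : IsIdempotentElem e) (hmem : ∀ j, j ∈ C j) :
    ⨆ j, piece e C j = range e := by
  refine le_antisymm (iSup_le fun _ => inf_le_left.trans inf_le_left) ?_
  calc range e = ⨆ j, range e ⊓ supported R R (accumulate C j) := by
        rw [← inf_supported_iUnion_of_directed _ monotone_accumulate.directed_le,
          Set.iUnion_accumulate, Set.iUnion_eq_univ_iff.mpr fun i => ⟨i, hmem i⟩, supported_univ,
          inf_top_eq]
    _ ≤ ⨆ j, piece e C j := iSup_le_iSup_of_le_biSup_lt_sup fun j => by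
        rw [biSup_lt_range_inf_supported]
        exact ((isProj_below hC he j).sup_inf_ker_eq (range_inf_supported_below_le j)).ge

theorem span_image_eq_piece (he : IsIdempotentElem e) (j : X) :
    Submodule.span R ((fun i => pieceProjection e C j (single i 1)) '' C j) = piece e C j := by
  rw [← (isProj_piece hC he j).range, range_eq_span_image_of_map_single_eq_zero]
  intro i hi
  have hbelow : supportedProjection (M := R) (R := R) (accumulate C j) (single i 1) ∈
      supported R R (below C j) := by
    by_cases hij : i ∈ accumulate C j
    · rw [(isProj_supportedProjection _).map_id _ (single_mem_supported R 1 hij)]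
      obtain ⟨k, hkj, hik⟩ := Set.mem_accumulate.mp hij
      have hkj : k < j := hkj.lt_of_ne (by rintro rfl; exact hi hik)
      exact single_mem_supported R 1 (Set.mem_iUnion₂.mpr ⟨k, hkj, Set.subset_accumulate hik⟩)
    · rw [supportedProjection_single_of_notMem _ hij]
      exact zero_mem _
  have hfix := (isProj_below hC he j).map_id _
    ⟨mem_range_self e _, supported_below_mem_invtSubmodule hC j hbelow⟩
  simp only [comp_apply] at hfix
  simp only [pieceProjection, comp_apply, LinearMap.sub_apply, id_apply, hfix, sub_self]

end Pieces

theorem exists_iSupIndep_iSup_eq_range {R X : Type*} [Ring R]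
    {e : Module.End R (X →₀ R)} (he : IsIdempotentElem e) :
    ∃ N : X → Submodule R (X →₀ R), iSupIndep N ∧ ⨆ j, N j = LinearMap.range e ∧
      ∀ j, (∃ s : Set (X →₀ R), s.Countable ∧ Submodule.span R s = N j) ∧
        Module.Projective R (N j) := by
  obtain ⟨_, _⟩ := exists_wellFoundedLT X
  choose C hjC hCc hCe using fun j : X => (Set.countable_singleton j).exists_superset_forall_subset
    (g := fun i => ((e (single i 1)).support : Set X)) fun i => Finset.countable_toSet _
  have hC : ∀ j, supported R R (C j) ∈ e.invtSubmodule :=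
    fun j => supported_mem_invtSubmodule_iff.mpr (hCe j)
  exact ⟨piece e C, iSupIndep_piece hC he, iSup_piece hC he fun j => hjC j rfl, fun j =>
    ⟨⟨_, (hCc j).image _, span_image_eq_piece hC he j⟩, (isProj_piece hC he j).projective⟩⟩

end Kaplansky

namespace Submodule

variable {R M M' ι : Type*} [Semiring R] [AddCommMonoid M] [Module R M] [AddCommMonoid M']
  [Module R M'] {f : M →ₗ[R] M'} (hf : Function.Injective f)
include hf

theorem iSupIndep_comap_of_injective {N : ι → Submodule R M'} (h : iSupIndep N) :
    iSupIndep fun i => (N i).comap f := by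
  intro j
  refine Disjoint.mono_right
    (iSup₂_le fun k hk => comap_mono (le_iSup₂ (f := fun k _ => N k) k hk)) ?_
  rw [disjoint_iff, ← comap_inf, disjoint_iff.mp (h j), comap_bot]
  exact LinearMap.ker_eq_bot_of_injective hf

theorem iSup_comap_eq_top_of_iSup_eq_range {N : ι → Submodule R M'}
    (h : ⨆ i, N i = LinearMap.range f) : ⨆ i, (N i).comap f = ⊤ := by
  have hN : ∀ i, N i ≤ LinearMap.range f := fun i => h ▸ le_iSup N i
  rw [← comap_iSup_map_of_injective hf]
  simp_rw [map_comap_eq_of_le (hN _), h]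
  exact eq_top_iff.mpr fun x _ => LinearMap.mem_range_self f x

theorem span_preimage_eq_comap_of_subset_range {s : Set M'} (hs : s ⊆ Set.range f) :
    span R (f ⁻¹' s) = (span R s).comap f := by
  apply map_injective_of_injective hf
  rw [map_span, Set.image_preimage_eq_of_subset hs, map_comap_eq_of_le (span_le.mpr hs)]

end Submodule

universe u v

/-- **Kaplansky's theorem.** Every projective module is a direct sum of countably
generated projective submodules. -/
theorem kaplansky_projective_directSum {R : Type u} [Ring R]
    {P : Type v} [AddCommGroup P] [Module R P] (hP : Module.Projective R P) :
    ∃ (ι : Type v) (N : ι → Submodule R P),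
      iSupIndep N ∧ iSup N = ⊤ ∧
      ∀ i, (∃ s : Set P, s.Countable ∧ Submodule.span R s = N i) ∧
        Module.Projective R (N i) := by
  obtain ⟨s, hs⟩ := hP.out
  have hinj : Function.Injective s := hs.injective
  have he : IsIdempotentElem (s ∘ₗ Finsupp.linearCombination R id) :=
    LinearMap.ext fun x => congrArg s (hs _)
  have hrange : LinearMap.range (s ∘ₗ Finsupp.linearCombination R id) = LinearMap.range s :=
    LinearMap.range_comp_of_range_eq_top _ (LinearMap.range_eq_top.mpr hs.surjective)
  obtain ⟨N, hind, hsup, hN⟩ := Kaplansky.exists_iSupIndep_iSup_eq_range he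
  rw [hrange] at hsup
  have hle : ∀ j, N j ≤ LinearMap.range s := fun j => hsup ▸ le_iSup N j
  refine ⟨P, fun j => (N j).comap s, Submodule.iSupIndep_comap_of_injective hinj hind,
    Submodule.iSup_comap_eq_top_of_iSup_eq_range hinj hsup, fun j => ?_⟩
  obtain ⟨⟨t, htc, htN⟩, hproj⟩ := hN j
  have hts : t ⊆ Set.range s := htN ▸ Submodule.subset_span |>.trans (hle j)
  refine ⟨⟨s ⁻¹' t, htc.preimage hinj, ?_⟩, ?_⟩
  · rw [Submodule.span_preimage_eq_comap_of_subset_range hinj hts, htN]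
  · exact .of_equiv' ((Submodule.equivMapOfInjective s hinj _).trans
      (LinearEquiv.ofEq _ _ (Submodule.map_comap_eq_of_le (hle j)))).symm
end

section
/- (Schanuel's Lemma, projective version) Let R be a ring and M an R-module. Suppose 0 → K →i P →p M → 0 and 0 → K' →i' P' →p' M → 0 are short exact sequences of R-modules (i, i' injective, p, p' surjective, range i = ker p, range i' = ker p') in which P and P' are projective. Then K × P' is R-linearly isomorphic to K' × P. -/
/-!
The fibre product `X = P ×_M P'` sits in the short exact sequences `0 → K' → X → P → 0` and
`0 → K → X → P' → 0`, obtained by pulling back each given sequence along the other surjection.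
Both split because `P` and `P'` are projective, so `K' × P ≅ X ≅ K × P'`.
-/

open Function LinearMap

section

variable {R N K P : Type*} [Ring R]
  [AddCommGroup N] [AddCommGroup K] [AddCommGroup P] [Module R N] [Module R K] [Module R P]

lemma Function.Exact.nonempty_linearEquiv_prod_of_projective [Module.Projective R P]
    {f : K →ₗ[R] N} {g : N →ₗ[R] P} (h : Exact f g) (hf : Injective f) (hg : Surjective g) :
    Nonempty (N ≃ₗ[R] K × P) :=
  let ⟨l, hl⟩ := g.exists_rightInverse_of_surjective (range_eq_top_of_surjective g hg)
  ⟨(h.splitSurjectiveEquiv hf ⟨l, hl⟩).1⟩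

end

namespace LinearMap

variable {R M P P' K' : Type*} [Ring R]
  [AddCommGroup M] [AddCommGroup P] [AddCommGroup P'] [AddCommGroup K']
  [Module R M] [Module R P] [Module R P'] [Module R K']

def pullback (p : P →ₗ[R] M) (p' : P' →ₗ[R] M) : Submodule R (P × P') :=
  eqLocus (p ∘ₗ fst R P P') (p' ∘ₗ snd R P P')

variable {p : P →ₗ[R] M} {p' : P' →ₗ[R] M}

@[simp]
lemma mem_pullback {x : P × P'} : x ∈ pullback p p' ↔ p x.1 = p' x.2 := Iff.rfl

variable (p p') in
def pullbackComm : pullback p p' ≃ₗ[R] pullback p' p :=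
  (LinearEquiv.prodComm R P P').ofSubmodules _ _ <| by
    ext ⟨b, a⟩
    simp [eq_comm]

variable (p p') in
def pullbackFst : pullback p p' →ₗ[R] P := fst R P P' ∘ₗ (pullback p p').subtype

lemma pullbackFst_surjective (hp' : Surjective p') : Surjective (pullbackFst p p') := fun a ↦
  let ⟨b, hb⟩ := hp' (p a)
  ⟨⟨(a, b), hb.symm⟩, rfl⟩

lemma exact_pullback {i' : K' →ₗ[R] P'} (h : Exact i' p') :
    Exact (codRestrict (pullback p p') (inr R P P' ∘ₗ i') fun c ↦ by
        simp [h.apply_apply_eq_zero c])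
      (pullbackFst p p') := by
  rintro ⟨⟨a, b⟩, hab⟩
  simp only [pullbackFst, Submodule.coe_subtype, comp_apply, fst_apply]
  constructor
  · rintro rfl
    obtain ⟨c, rfl⟩ := (h b).1 (by simpa using hab.symm)
    exact ⟨c, rfl⟩
  · rintro ⟨c, hc⟩
    exact congrArg (fun x : pullback p p' ↦ (x : P × P').1) hc.symm

lemma nonempty_pullback_equiv_prod [Module.Projective R P] {i' : K' →ₗ[R] P'}
    (hi' : Injective i') (hp' : Surjective p') (h : Exact i' p') :
    Nonempty (pullback p p' ≃ₗ[R] K' × P) :=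
  (exact_pullback h).nonempty_linearEquiv_prod_of_projective
    (fun _ _ hcd ↦ hi' (congrArg (fun x : pullback p p' ↦ (x : P × P').2) hcd))
    (pullbackFst_surjective hp')

end LinearMap

/-- **Schanuel's Lemma (projective version).** Given short exact sequences
`0 → K → P → M → 0` and `0 → K' → P' → M → 0` with `P`, `P'` projective,
we have `K × P' ≅ K' × P`. -/
theorem schanuel_projective {R : Type*} [Ring R]
    {M K P K' P' : Type*}
    [AddCommGroup M] [AddCommGroup K] [AddCommGroup P] [AddCommGroup K'] [AddCommGroup P']
    [Module R M] [Module R K] [Module R P] [Module R K'] [Module R P']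
    (hP : Module.Projective R P) (hP' : Module.Projective R P')
    (i : K →ₗ[R] P) (p : P →ₗ[R] M)
    (i' : K' →ₗ[R] P') (p' : P' →ₗ[R] M)
    (hi : Function.Injective i) (hp : Function.Surjective p)
    (hip : LinearMap.range i = LinearMap.ker p)
    (hi' : Function.Injective i') (hp' : Function.Surjective p')
    (hip' : LinearMap.range i' = LinearMap.ker p') :
    Nonempty ((K × P') ≃ₗ[R] (K' × P)) := by
  obtain ⟨e⟩ := nonempty_pullback_equiv_prod (p := p) hi' hp' (exact_iff.2 hip'.symm)
  obtain ⟨e'⟩ := nonempty_pullback_equiv_prod (p := p') hi hp (exact_iff.2 hip.symm)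
  exact ⟨e'.symm ≪≫ₗ (pullbackComm p' p) ≪≫ₗ e⟩
end

section
/- Let R be a commutative ring and let A →f B →g C be R-linear maps. The sequence is exact at B (i.e. range f = ker g) if and only if the induced sequence of character modules C⁺ →g⁺ B⁺ →f⁺ A⁺ is exact at B⁺, where g⁺(φ) = φ ∘ g and f⁺(ψ) = ψ ∘ f. -/
/-!
Exactness at `B` splits into `g ∘ f = 0` and `ker g ≤ range f`. Characters separate points, so
`f ↦ f⁺` is injective and `g ∘ f = 0` iff `f⁺ ∘ g⁺ = 0`. For the other inclusions: an element of
`ker g` outside `range f` is detected by a character of `B ⧸ range f`, i.e. by an element of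
`ker f⁺`; conversely a character of `B` killing `ker g` descends to `range g ≤ C` and extends to
`C` because `ℚ/ℤ` is divisible, hence injective.
-/

namespace CharacterModule

variable {R : Type*} [CommRing R] {A B C : Type*} [AddCommGroup A] [AddCommGroup B]
  [AddCommGroup C] [Module R A] [Module R B] [Module R C]

lemma dual_eq_zero_iff {f : A →ₗ[R] B} : dual f = 0 ↔ f = 0 := by
  refine ⟨fun hf => LinearMap.ext fun a => eq_zero_of_character_apply fun c => ?_,
    fun hf => hf ▸ dual_zero⟩
  exact DFunLike.congr_fun (LinearMap.congr_fun hf c) a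

lemma range_dual_le_ker_dual_iff {f : A →ₗ[R] B} {g : B →ₗ[R] C} :
    LinearMap.range (dual g) ≤ LinearMap.ker (dual f) ↔
      LinearMap.range f ≤ LinearMap.ker g := by
  rw [LinearMap.range_le_ker_iff, LinearMap.range_le_ker_iff, ← dual_comp, dual_eq_zero_iff]

lemma exists_dual_eq_of_forall_apply_eq_zero (g : B →ₗ[R] C) {ψ : CharacterModule B}
    (hψ : ∀ b, g b = 0 → ψ b = 0) : ∃ χ : CharacterModule C, dual g χ = ψ := by
  let g' := g.toAddMonoidHom.rangeRestrict
  let ψ' := g'.liftOfSurjective g.toAddMonoidHom.rangeRestrict_surjective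
    ⟨ψ, fun b hb => hψ b (congrArg Subtype.val hb)⟩
  obtain ⟨χ, hχ⟩ := (Module.Baer.of_divisible _).extension_property_addMonoidHom
    g.toAddMonoidHom.range.subtype Subtype.val_injective ψ'
  refine ⟨χ, DFunLike.ext _ _ fun b => ?_⟩
  calc χ (g b) = ψ' (g' b) := DFunLike.congr_fun hχ (g' b)
    _ = ψ b := g'.liftOfRightInverse_comp_apply _ _ _ b

lemma ker_dual_le_range_dual {f : A →ₗ[R] B} {g : B →ₗ[R] C}
    (h : LinearMap.ker g ≤ LinearMap.range f) :
    LinearMap.ker (dual f) ≤ LinearMap.range (dual g) := by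
  intro ψ hψ
  refine exists_dual_eq_of_forall_apply_eq_zero g fun b hb => ?_
  obtain ⟨a, rfl⟩ := h hb
  exact DFunLike.congr_fun hψ a

lemma ker_le_range_of_ker_dual_le_range_dual {f : A →ₗ[R] B} {g : B →ₗ[R] C}
    (h : LinearMap.ker (dual f) ≤ LinearMap.range (dual g)) :
    LinearMap.ker g ≤ LinearMap.range f := by
  intro b hb
  rw [← Submodule.Quotient.mk_eq_zero]
  refine eq_zero_of_character_apply fun c => ?_
  have hc : dual (LinearMap.range f).mkQ c ∈ LinearMap.ker (dual f) := by
    rw [LinearMap.mem_ker, ← LinearMap.comp_apply, ← dual_comp, LinearMap.range_mkQ_comp,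
      dual_zero, LinearMap.zero_apply]
  obtain ⟨χ, hχ⟩ := h hc
  calc c (Submodule.Quotient.mk b) = χ (g b) := (DFunLike.congr_fun hχ b).symm
    _ = 0 := by rw [LinearMap.mem_ker.mp hb, map_zero]

end CharacterModule

/-- A sequence `A →f B →g C` of `R`-linear maps is exact at `B` if and only if
the induced sequence of character modules `C⁺ →g⁺ B⁺ →f⁺ A⁺` is exact at `B⁺`. -/
theorem exact_iff_characterModule_exact {R : Type*} [CommRing R]
    {A B C : Type*} [AddCommGroup A] [AddCommGroup B] [AddCommGroup C]
    [Module R A] [Module R B] [Module R C]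
    (f : A →ₗ[R] B) (g : B →ₗ[R] C) :
    LinearMap.range f = LinearMap.ker g ↔
      LinearMap.range (CharacterModule.dual g) = LinearMap.ker (CharacterModule.dual f) := by
  rw [le_antisymm_iff, le_antisymm_iff, CharacterModule.range_dual_le_ker_dual_iff]
  exact and_congr_right' ⟨CharacterModule.ker_dual_le_range_dual,
    CharacterModule.ker_le_range_of_ker_dual_le_range_dual⟩
end

section
/- (Eckmann–Schöpf) Let R be a ring and M an R-module. Then M has an injective envelope: there exist an injective R-module E and an injective R-linear map α : M → E whose image is essential in E, i.e. every nonzero submodule N of E satisfies N ⊓ range(α) ≠ 0. -/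
universe u v w

/-!
Embed `M` into an injective module `Q` and, by Zorn's lemma, let `E ≤ Q` be maximal among the
submodules in which `M` is essential; by transitivity of essentiality, `E` has no proper essential
extension inside `Q`. Choose `C ≤ Q` maximal with `C ⊓ E = ⊥`; then `E` embeds essentially into
`Q ⧸ C`, and extending the inclusion `E → Q` along this embedding gives a map `Q ⧸ C → Q` which is
injective (its kernel misses the essential image of `E`). Its range is therefore an essential
extension of `E`, hence equal to `E`, and the composite `Q → Q ⧸ C → E` retracts `Q` onto `E`,
so `E` is injective.
-/

section Lattice

variable {α : Type*}

def IsEssentialIn [Lattice α] [OrderBot α] (a b : α) : Prop :=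
  a ≤ b ∧ ∀ c ≤ b, Disjoint c a → c = ⊥

namespace IsEssentialIn

variable [Lattice α] [OrderBot α] {a b c : α}

theorem refl (a : α) : IsEssentialIn a a :=
  ⟨le_rfl, fun _ hc hdisj => hdisj.eq_bot_of_le hc⟩

theorem trans (hab : IsEssentialIn a b) (hbc : IsEssentialIn b c) : IsEssentialIn a c := by
  refine ⟨hab.1.trans hbc.1, fun d hd hda => hbc.2 d hd ?_⟩
  rw [disjoint_iff]
  exact hab.2 _ inf_le_right (hda.mono_left inf_le_left)

end IsEssentialIn

theorem isEssentialIn_top_iff [Lattice α] [BoundedOrder α] {a : α} :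
    IsEssentialIn a ⊤ ↔ ∀ c, c ≠ ⊥ → c ⊓ a ≠ ⊥ := by
  simp only [IsEssentialIn, le_top, true_and, disjoint_iff]
  exact forall_congr' fun c => by tauto

variable [CompleteLattice α] [IsCompactlyGenerated α]

theorem DirectedOn.isEssentialIn_sSup {a : α} {s : Set α} (hs : DirectedOn (· ≤ ·) s)
    (hne : s.Nonempty) (h : ∀ b ∈ s, IsEssentialIn a b) : IsEssentialIn a (sSup s) := by
  obtain ⟨b, hb⟩ := hne
  refine ⟨(h b hb).1.trans (le_sSup hb), fun c hc hca => ?_⟩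
  rw [← inf_eq_left.mpr hc, hs.inf_sSup_eq, iSup₂_eq_bot]
  exact fun d hd => (h d hd).2 _ inf_le_right (hca.mono_left inf_le_left)

theorem exists_maximal_isEssentialIn (a : α) : ∃ b, Maximal (IsEssentialIn a) b := by
  obtain ⟨b, -, hb⟩ := zorn_le_nonempty₀ {b | IsEssentialIn a b}
    (fun c hc hchain d hd => ⟨sSup c,
      hchain.directedOn.isEssentialIn_sSup ⟨d, hd⟩ hc, fun _ => le_sSup⟩) a (.refl a)
  exact ⟨b, hb⟩

theorem exists_maximal_disjoint (a : α) : ∃ c, Maximal (Disjoint · a) c := by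
  obtain ⟨c, -, hc⟩ := zorn_le_nonempty₀ {c | Disjoint c a}
    (fun c hc hchain d hd => ⟨sSup c,
      (hchain.directedOn.disjoint_sSup_left).mpr hc, fun _ => le_sSup⟩) ⊥ disjoint_bot_left
  exact ⟨c, hc⟩

end Lattice

theorem Module.Injective.of_leftInverse {R : Type*} [Ring R] {Q E : Type w}
    [AddCommGroup Q] [Module R Q] [AddCommGroup E] [Module R E] [Module.Injective R Q]
    (i : E →ₗ[R] Q) (r : Q →ₗ[R] E) (hri : Function.LeftInverse r i) : Module.Injective R E :=
  ⟨fun _ _ _ _ _ _ f hf g =>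
    let ⟨G, hG⟩ := Module.Injective.out f hf (i ∘ₗ g)
    ⟨r ∘ₗ G, fun x => by rw [LinearMap.comp_apply, hG, LinearMap.comp_apply, hri]⟩⟩

namespace Submodule

variable {R : Type*} [Ring R] {M N : Type*} [AddCommGroup M] [Module R M]
  [AddCommGroup N] [Module R N]

theorem isEssentialIn_map_iff {f : M →ₗ[R] N} (hf : Function.Injective f)
    {S T : Submodule R M} : IsEssentialIn (S.map f) (T.map f) ↔ IsEssentialIn S T := by
  refine ⟨fun h => ⟨(map_le_map_iff_of_injective hf S T).mp h.1, fun P hP hPS => ?_⟩,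
    fun h => ⟨map_mono h.1, fun P hP hPS => ?_⟩⟩
  · exact map_injective_of_injective hf <| by
      rw [map_bot]; exact h.2 _ (map_mono hP) (disjoint_map hf hPS)
  · have hPf : P ≤ LinearMap.range f := hP.trans LinearMap.map_le_range
    rw [← map_comap_eq_of_le hPf] at hP hPS ⊢
    rw [h.2 _ ((map_le_map_iff_of_injective hf _ _).mp hP) ?_, map_bot]
    rw [disjoint_iff, ← map_injective_of_injective hf |>.eq_iff, map_inf _ hf, map_bot]
    exact hPS.eq_bot

theorem isEssentialIn_map_mkQ {E C : Submodule R M} (hC : Maximal (Disjoint · E) C) :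
    IsEssentialIn (E.map C.mkQ) ⊤ := by
  refine isEssentialIn_top_iff.mpr fun P hP hPE => hP ?_
  have hCP : C ≤ P.comap C.mkQ := by
    simpa only [comap_bot, ker_mkQ] using comap_mono (f := C.mkQ) (bot_le : ⊥ ≤ P)
  have hPE' : P.comap C.mkQ ⊓ E ≤ C := by
    calc P.comap C.mkQ ⊓ E ≤ (⊥ : Submodule R (M ⧸ C)).comap C.mkQ := by
          rw [← map_le_iff_le_comap, ← hPE]
          exact (map_inf_le _).trans (inf_le_inf_right _ (map_comap_le _ _))
      _ = C := by rw [comap_bot, ker_mkQ]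
  have hdisj : Disjoint (P.comap C.mkQ) E :=
    disjoint_iff.mpr (le_bot_iff.mp (hC.1.eq_bot ▸ le_inf hPE' inf_le_right))
  rw [eq_bot_iff, ← mkQ_map_self C, ← map_comap_eq_of_surjective (mkQ_surjective C) P]
  exact map_mono (hC.2 hdisj hCP)

theorem injective_of_forall_isEssentialIn_eq [Module.Injective R M] {E : Submodule R M}
    (hE : ∀ F, IsEssentialIn E F → F = E) : Module.Injective R E := by
  obtain ⟨C, hC⟩ := exists_maximal_disjoint E
  let e : E →ₗ[R] M ⧸ C := C.mkQ ∘ₗ E.subtype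
  have he : Function.Injective e := by
    rw [← LinearMap.ker_eq_bot, LinearMap.ker_comp, ker_mkQ, ← disjoint_iff_comap_eq_bot]
    exact hC.1.symm
  have hrange : LinearMap.range e = E.map C.mkQ := by
    rw [LinearMap.range_comp, range_subtype]
  obtain ⟨h, hh⟩ := Module.Injective.out e he E.subtype
  have hinj : Function.Injective h := by
    rw [← LinearMap.ker_eq_bot]
    refine (isEssentialIn_map_mkQ hC).2 _ le_top ?_
    rw [← hrange, disjoint_iff, eq_bot_iff]
    rintro _ ⟨hker, x, rfl⟩
    have hx : (x : M) = 0 := (hh x).symm.trans hker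
    simp [(ZeroMemClass.coe_eq_zero).mp hx]
  have hmap : (E.map C.mkQ).map h = E := by
    rw [← hrange, ← LinearMap.range_comp, (LinearMap.ext hh : h ∘ₗ e = E.subtype), range_subtype]
  have hF : LinearMap.range (h ∘ₗ C.mkQ) = E := by
    refine hE _ ?_
    rw [LinearMap.range_comp, range_mkQ, ← hmap]
    exact (isEssentialIn_map_iff hinj).mpr (isEssentialIn_map_mkQ hC)
  exact Module.Injective.of_leftInverse E.subtype
    ((h ∘ₗ C.mkQ).codRestrict E fun x => hF ▸ LinearMap.mem_range_self _ x)
    fun x => Subtype.ext (hh x)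

end Submodule

theorem Module.exists_injective_linearMap_to_injective (R : Type u) [Ring R] (M : Type v)
    [AddCommGroup M] [Module R M] : ∃ (Q : Type (max u v)) (_ : AddCommGroup Q) (_ : Module R Q),
      Module.Injective R Q ∧ ∃ i : M →ₗ[R] Q, Function.Injective i := by
  have := ModuleCat.enoughInjectives.{v} R
  obtain ⟨⟨Q, hQ, i, hi⟩⟩ := CategoryTheory.EnoughInjectives.presentation (ModuleCat.of R (ULift.{u} M))
  have : CategoryTheory.Injective (ModuleCat.of R Q) := hQ
  exact ⟨Q, inferInstance, inferInstance, Module.injective_module_of_injective_object R Q,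
    i.hom ∘ₗ ULift.moduleEquiv.symm.toLinearMap,
    ((ModuleCat.mono_iff_injective i).mp hi).comp ULift.moduleEquiv.symm.injective⟩

/-- **Eckmann–Schöpf.** Every module has an injective envelope: there is an
injective module `E` and an injective linear map `α : M → E` whose image is an
essential submodule of `E`. -/
theorem exists_injective_envelope (R : Type u) [Ring R]
    (M : Type v) [AddCommGroup M] [Module R M] :
    ∃ (E : Type (max u v)) (_ : AddCommGroup E) (_ : Module R E),
      Module.Injective R E ∧
      ∃ α : M →ₗ[R] E, Function.Injective α ∧
        ∀ N : Submodule R E, N ≠ ⊥ → N ⊓ LinearMap.range α ≠ ⊥ := by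
  obtain ⟨Q, _, _, _, i, hi⟩ := Module.exists_injective_linearMap_to_injective R M
  obtain ⟨E, hE⟩ := exists_maximal_isEssentialIn (LinearMap.range i)
  have hEinj : Module.Injective R E := Submodule.injective_of_forall_isEssentialIn_eq
    fun F hF => (hE.2 (hE.1.trans hF) hF.1).antisymm hF.1
  let α : M →ₗ[R] E := i.codRestrict E fun m => hE.1.1 ⟨m, rfl⟩
  have hα : (LinearMap.range α).map E.subtype = LinearMap.range i := by
    rw [← LinearMap.range_comp, LinearMap.subtype_comp_codRestrict]
  refine ⟨E, inferInstance, inferInstance, hEinj, α,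
    fun a b hab => hi (congrArg Subtype.val hab), isEssentialIn_top_iff.mp ?_⟩
  rw [← Submodule.isEssentialIn_map_iff E.injective_subtype, hα, Submodule.map_subtype_top]
  exact hE.1
end
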